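/- Fix δ ∈ (0,1) and c₀ > 0, and for each integer k ≥ 2 let R = c₀·ln(k/δ)·√k, D = ⌊k/R⌋, and let Ω_R be the Robust Soliton distribution. Then there exists an integer K₀ such that for all k ≥ K₀, the probability that a node stores an encoded packet of degree one satisfies Ω′(1) = ∑_{d=1}^{k} d·(1 − d/k)^{k−1}·Ω_R(d) ≥ R/(4k). -/

import Mathlib

/-- The Ideal Soliton distribution on `{1, …, k}`:
`Ω_I(1) = 1/k` and `Ω_I(d) = 1/(d(d−1))` for `d = 2, …, k`. -/
noncomputable def idealSoliton (k d : ℕ) : ℝ :=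
  if d = 1 then 1 / (k : ℝ) else 1 / ((d : ℝ) * ((d : ℝ) - 1))

/-- The function `τ` from the Robust Soliton construction: with `D = ⌊k/R⌋`,
`τ(d) = R/(dk)` for `1 ≤ d ≤ D−1`, `τ(D) = R·ln(R/δ)/k`, and `τ(d) = 0` for `D < d ≤ k`. -/
noncomputable def tauRS (k : ℕ) (R δ : ℝ) (d : ℕ) : ℝ :=
  if d < ⌊(k : ℝ) / R⌋₊ then R / ((d : ℝ) * (k : ℝ))
  else if d = ⌊(k : ℝ) / R⌋₊ then R * Real.log (R / δ) / (k : ℝ)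
  else 0

/-- The normalizing constant `β = ∑_{i=1}^{k} (τ(i) + Ω_I(i))`. -/
noncomputable def betaRS (k : ℕ) (R δ : ℝ) : ℝ :=
  ∑ i ∈ Finset.Icc 1 k, (tauRS k R δ i + idealSoliton k i)

/-- The Robust Soliton distribution `Ω_R(d) = (τ(d) + Ω_I(d))/β`. -/
noncomputable def robustSoliton (k : ℕ) (R δ : ℝ) (d : ℕ) : ℝ :=
  (tauRS k R δ d + idealSoliton k d) / betaRS k R δ

/-!
The degree-two term alone already beats `R/(4k)`. Since `τ ≥ 0` and `Ω_I` sums to one, `β ≥ 1`;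
the values `τ(d) ≤ R/k` for `d < D` add up to at most `D·R/k ≤ 1`, and `τ(D) = R·ln(R/δ)/k → 0`,
so eventually `β ≤ 3`. Hence `Ω_R(2) ≥ Ω_I(2)/β ≥ 1/6`, and with `(1 − 2/k)^{k−1} ≥ e^{−4}` the sum
is bounded below by the constant `e^{−4}/3`, whereas `R/k = c₀·ln(k/δ)/√k → 0`.
-/

open Filter Real Topology

theorem exp_neg_div_one_sub_mul_le_one_sub_pow {t : ℝ} (ht : t < 1) (m : ℕ) :
    exp (-(t / (1 - t)) * m) ≤ (1 - t) ^ m := by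
  have h₁ : 0 < 1 - t := sub_pos.2 ht
  have hlog : -(t / (1 - t)) ≤ log (1 - t) := by
    have h : 1 - (1 - t)⁻¹ = -(t / (1 - t)) := by field_simp; ring
    exact h ▸ one_sub_inv_le_log_of_pos h₁
  rw [← exp_log h₁, ← exp_nat_mul, exp_log h₁, mul_comm]
  exact exp_le_exp.2 (mul_le_mul_of_nonneg_left hlog m.cast_nonneg)

theorem exp_neg_four_le_one_sub_two_div_pow {k : ℕ} (hk : 3 ≤ k) :
    exp (-4) ≤ (1 - 2 / (k : ℝ)) ^ (k - 1) := by
  have hk' : (3 : ℝ) ≤ k := by exact_mod_cast hk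
  refine le_trans (exp_le_exp.2 ?_) (exp_neg_div_one_sub_mul_le_one_sub_pow
    ((div_lt_one (by positivity)).2 (by linarith)) (k - 1))
  have h : 2 / (k : ℝ) / (1 - 2 / k) = 2 / (k - 2) := by
    field_simp
  rw [h, Nat.cast_sub (by omega), Nat.cast_one, neg_mul, neg_le_neg_iff,
    div_mul_eq_mul_div, div_le_iff₀ (by linarith)]
  linarith

theorem sum_Icc_two_one_div_mul_sub_one {k : ℕ} (hk : 1 ≤ k) :
    ∑ i ∈ Finset.Icc 2 k, 1 / ((i : ℝ) * ((i : ℝ) - 1)) = 1 - 1 / k := by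
  induction k, hk using Nat.le_induction with
  | base => norm_num
  | succ n hn ih =>
    rw [Finset.sum_Icc_succ_top (by omega), ih]
    have : (n : ℝ) ≠ 0 := by positivity
    push_cast
    rw [add_sub_cancel_right]
    field_simp
    ring

theorem idealSoliton_of_ne_one {k d : ℕ} (hd : d ≠ 1) :
    idealSoliton k d = 1 / ((d : ℝ) * ((d : ℝ) - 1)) :=
  if_neg hd

theorem idealSoliton_nonneg (k d : ℕ) : 0 ≤ idealSoliton k d := by
  unfold idealSoliton
  split_ifs
  · positivity
  · rcases d with _ | d
    · simp
    · push_cast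
      rw [add_sub_cancel_right]
      positivity

theorem sum_idealSoliton {k : ℕ} (hk : 1 ≤ k) : ∑ i ∈ Finset.Icc 1 k, idealSoliton k i = 1 := by
  rw [← Finset.insert_Icc_add_one_left_eq_Icc hk, Finset.sum_insert (by simp),
    Finset.sum_congr rfl fun i hi => idealSoliton_of_ne_one (by simp at hi; omega)]
  simp only [Nat.reduceAdd]
  rw [sum_Icc_two_one_div_mul_sub_one hk, idealSoliton, if_pos rfl]
  ring

section RobustSoliton

variable {k : ℕ} {R δ : ℝ}

theorem tauRS_nonneg (hR : 0 ≤ R) (hRδ : 0 ≤ log (R / δ)) (d : ℕ) : 0 ≤ tauRS k R δ d := by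
  unfold tauRS
  split_ifs <;> positivity

theorem tauRS_le (hR : 0 ≤ R) {d : ℕ} (hd : 1 ≤ d) :
    tauRS k R δ d ≤ (if d < ⌊(k : ℝ) / R⌋₊ then R / k else 0) +
      if d = ⌊(k : ℝ) / R⌋₊ then R * log (R / δ) / k else 0 := by
  unfold tauRS
  by_cases h : d < ⌊(k : ℝ) / R⌋₊
  · rw [if_pos h, if_pos h, if_neg h.ne, add_zero, mul_comm, ← div_div]
    exact div_le_self (by positivity) (by exact_mod_cast hd)
  · simp only [if_neg h, zero_add, le_refl]

theorem sum_tauRS_le (hR : 0 < R) (hRδ : 0 ≤ log (R / δ)) :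
    ∑ d ∈ Finset.Icc 1 k, tauRS k R δ d ≤ 1 + R * log (R / δ) / k := by
  set D := ⌊(k : ℝ) / R⌋₊
  have hlow : ∑ d ∈ Finset.Icc 1 k, (if d < D then R / k else 0) ≤ 1 := by
    have hDR : (D : ℝ) * R ≤ k := (le_div_iff₀ hR).1 (Nat.floor_le (by positivity))
    calc ∑ d ∈ Finset.Icc 1 k, (if d < D then R / k else 0)
        = ∑ d ∈ (Finset.Icc 1 k).filter (· < D), R / k := (Finset.sum_filter _ _).symm
      _ ≤ ∑ _d ∈ Finset.range D, R / k :=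
        Finset.sum_le_sum_of_subset_of_nonneg (fun d hd => by simp at hd ⊢; omega)
          fun _ _ _ => by positivity
      _ = D * R / k := by rw [Finset.sum_const, Finset.card_range, nsmul_eq_mul, mul_div_assoc]
      _ ≤ 1 := div_le_one_of_le₀ hDR k.cast_nonneg
  have htop : ∑ d ∈ Finset.Icc 1 k, (if d = D then R * log (R / δ) / k else 0) ≤
      R * log (R / δ) / k := by
    rw [Finset.sum_ite_eq']
    split_ifs
    · rfl
    · positivity
  calc ∑ d ∈ Finset.Icc 1 k, tauRS k R δ d
      ≤ ∑ d ∈ Finset.Icc 1 k, ((if d < D then R / k else 0) +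
          if d = D then R * log (R / δ) / k else 0) :=
        Finset.sum_le_sum fun d hd => tauRS_le hR.le (Finset.mem_Icc.1 hd).1
    _ ≤ 1 + R * log (R / δ) / k := by
      rw [Finset.sum_add_distrib]
      exact add_le_add hlow htop

theorem betaRS_eq_sum_tauRS_add_one (hk : 1 ≤ k) :
    betaRS k R δ = ∑ d ∈ Finset.Icc 1 k, tauRS k R δ d + 1 := by
  rw [betaRS, Finset.sum_add_distrib, sum_idealSoliton hk]

theorem one_le_betaRS (hk : 1 ≤ k) (hR : 0 ≤ R) (hRδ : 0 ≤ log (R / δ)) :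
    1 ≤ betaRS k R δ := by
  rw [betaRS_eq_sum_tauRS_add_one hk]
  linarith [Finset.sum_nonneg fun d (_ : d ∈ Finset.Icc 1 k) => tauRS_nonneg (k := k) hR hRδ d]

theorem betaRS_le (hk : 1 ≤ k) (hR : 0 < R) (hRδ : 0 ≤ log (R / δ)) :
    betaRS k R δ ≤ 2 + R * log (R / δ) / k := by
  rw [betaRS_eq_sum_tauRS_add_one hk]
  linarith [sum_tauRS_le (k := k) hR hRδ]

theorem robustSoliton_nonneg (hk : 1 ≤ k) (hR : 0 ≤ R) (hRδ : 0 ≤ log (R / δ)) (d : ℕ) :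
    0 ≤ robustSoliton k R δ d :=
  div_nonneg (add_nonneg (tauRS_nonneg hR hRδ d) (idealSoliton_nonneg k d))
    (zero_le_one.trans (one_le_betaRS hk hR hRδ))

theorem exp_neg_four_div_three_le_sum_robustSoliton (hk : 3 ≤ k) (hR : 0 < R)
    (hRδ : 0 ≤ log (R / δ)) (hτ : R * log (R / δ) / k ≤ 1) :
    exp (-4) / 3 ≤
      ∑ d ∈ Finset.Icc 1 k, (d : ℝ) * (1 - d / k) ^ (k - 1) * robustSoliton k R δ d := by
  have hβ₁ := one_le_betaRS (k := k) (δ := δ) (by omega) hR.le hRδ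
  have hβ₃ : betaRS k R δ ≤ 3 := by linarith [betaRS_le (k := k) (δ := δ) (by omega) hR hRδ]
  have hΩ₂ : 1 / 6 ≤ robustSoliton k R δ 2 := by
    rw [robustSoliton, idealSoliton_of_ne_one (by norm_num), le_div_iff₀ (by linarith)]
    nlinarith [tauRS_nonneg (k := k) hR.le hRδ 2]
  have hsummand : ∀ d ∈ Finset.Icc 1 k,
      0 ≤ (d : ℝ) * (1 - d / k) ^ (k - 1) * robustSoliton k R δ d := by
    intro d hd
    have hdk : (d : ℝ) ≤ k := by exact_mod_cast (Finset.mem_Icc.1 hd).2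
    have : 0 ≤ 1 - (d : ℝ) / k := sub_nonneg.2 (div_le_one_of_le₀ hdk k.cast_nonneg)
    have := robustSoliton_nonneg (k := k) (δ := δ) (by omega) hR.le hRδ d
    positivity
  calc exp (-4) / 3 = 2 * exp (-4) * (1 / 6) := by ring
    _ ≤ 2 * (1 - 2 / k) ^ (k - 1) * robustSoliton k R δ 2 := by
      have := exp_neg_four_le_one_sub_two_div_pow hk
      gcongr
      linarith [exp_pos (-4)]
    _ ≤ _ := by
      exact_mod_cast Finset.single_le_sum (a := 2) hsummand
        (Finset.mem_Icc.2 ⟨one_le_two, by omega⟩)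

end RobustSoliton

theorem tendsto_log_pow_div_sqrt (n : ℕ) : Tendsto (fun x : ℝ => log x ^ n / √x) atTop (𝓝 0) := by
  simpa [rpow_natCast, sqrt_eq_rpow, one_div] using
    (isLittleO_log_rpow_rpow_atTop (n : ℝ) one_half_pos).tendsto_div_nhds_zero

theorem tendsto_log_div_pow_div_sqrt {δ : ℝ} (hδ : 0 < δ) (n : ℕ) :
    Tendsto (fun x : ℝ => log (x / δ) ^ n / √x) atTop (𝓝 0) := by
  have h := ((tendsto_log_pow_div_sqrt n).comp (tendsto_id.atTop_div_const hδ)).div_const √δ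
  rw [zero_div] at h
  refine h.congr fun x => ?_
  have : √δ ≠ 0 := (sqrt_pos.2 hδ).ne'
  simp only [Function.comp_apply, id, sqrt_div' x hδ.le]
  field_simp

noncomputable def robustSolitonR (c₀ δ : ℝ) (k : ℕ) : ℝ :=
  c₀ * log (k / δ) * √k

section Asymptotics

variable {c₀ δ : ℝ}

theorem tendsto_robustSolitonR_atTop (hδ : 0 < δ) (hc₀ : 0 < c₀) :
    Tendsto (robustSolitonR c₀ δ) atTop atTop := by
  have hk := tendsto_natCast_atTop_atTop (R := ℝ)
  have hlog := tendsto_log_atTop.comp (hk.atTop_div_const hδ)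
  refine (Tendsto.const_mul_atTop hc₀ (hlog.atTop_mul_atTop₀ (tendsto_sqrt_atTop.comp hk))).congr
    fun k => ?_
  simp only [Function.comp_apply, robustSolitonR, mul_assoc]

theorem tendsto_robustSolitonR_mul_log_pow_div (hδ : 0 < δ) (n : ℕ) :
    Tendsto (fun k : ℕ => robustSolitonR c₀ δ k * log (k / δ) ^ n / k) atTop (𝓝 0) := by
  have h := ((tendsto_log_div_pow_div_sqrt hδ (n + 1)).comp
    tendsto_natCast_atTop_atTop).const_mul c₀
  rw [mul_zero] at h
  refine h.congr fun k => ?_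
  simp only [Function.comp_apply, robustSolitonR]
  rw [pow_succ, mul_div_assoc, div_eq_mul_one_div (log _), ← sqrt_div_self']
  ring

theorem tendsto_robustSolitonR_mul_log_div (hδ : 0 < δ) (hc₀ : 0 < c₀) :
    Tendsto (fun k : ℕ => robustSolitonR c₀ δ k * log (robustSolitonR c₀ δ k / δ) / k)
      atTop (𝓝 0) := by
  have hRk : ∀ᶠ k : ℕ in atTop, robustSolitonR c₀ δ k / k ≤ 1 := by
    simpa using (tendsto_robustSolitonR_mul_log_pow_div (c₀ := c₀) hδ 0).eventually
      (eventually_le_nhds one_pos)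
  have hbounds : ∀ᶠ k : ℕ in atTop,
      0 ≤ robustSolitonR c₀ δ k * log (robustSolitonR c₀ δ k / δ) / k ∧
      robustSolitonR c₀ δ k * log (robustSolitonR c₀ δ k / δ) / k ≤
        robustSolitonR c₀ δ k * log (k / δ) / k := by
    filter_upwards [(tendsto_robustSolitonR_atTop hδ hc₀).eventually_ge_atTop δ, hRk,
      eventually_gt_atTop 0] with k hδR hRk hk
    have hR : 0 < robustSolitonR c₀ δ k := hδ.trans_le hδR
    have hk : (0 : ℝ) < k := by exact_mod_cast hk
    have hRk : robustSolitonR c₀ δ k ≤ k := (div_le_one hk).1 hRk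
    have := log_nonneg ((one_le_div hδ).2 hδR)
    exact ⟨by positivity, by gcongr⟩
  exact tendsto_of_tendsto_of_tendsto_of_le_of_le' tendsto_const_nhds
    (by simpa using tendsto_robustSolitonR_mul_log_pow_div (c₀ := c₀) hδ 1)
    (hbounds.mono fun _ h => h.1) (hbounds.mono fun _ h => h.2)

end Asymptotics

/-- Fix `δ ∈ (0,1)` and `c₀ > 0`, and for each integer `k ≥ 2` let
`R = c₀·ln(k/δ)·√k`, `D = ⌊k/R⌋`, and let `Ω_R` be the Robust Soliton distribution.
Then there exists an integer `K₀` such that for all `k ≥ K₀`, the probability that a node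
stores an encoded packet of degree one satisfies
`Ω′(1) = ∑_{d=1}^{k} d·(1 − d/k)^{k−1}·Ω_R(d) ≥ R/(4k)`. -/
theorem robustSoliton_degree_one_ge (δ c₀ : ℝ) (hδ : δ ∈ Set.Ioo (0 : ℝ) 1)
    (hc₀ : 0 < c₀) :
    ∃ K₀ : ℕ, 2 ≤ K₀ ∧ ∀ k : ℕ, K₀ ≤ k →
      ∑ d ∈ Finset.Icc 1 k, (d : ℝ) * (1 - (d : ℝ) / (k : ℝ)) ^ (k - 1) *
          robustSoliton k (c₀ * Real.log ((k : ℝ) / δ) * Real.sqrt (k : ℝ)) δ d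
        ≥ c₀ * Real.log ((k : ℝ) / δ) * Real.sqrt (k : ℝ) / (4 * (k : ℝ)) := by
  have hδ₀ := hδ.1
  have hRk : Tendsto (fun k : ℕ => robustSolitonR c₀ δ k / k) atTop (𝓝 0) := by
    simpa using tendsto_robustSolitonR_mul_log_pow_div (c₀ := c₀) hδ₀ 0
  obtain ⟨K, hK⟩ := eventually_atTop.1 <| (eventually_ge_atTop 3).and <|
    ((tendsto_robustSolitonR_atTop hδ₀ hc₀).eventually_ge_atTop δ).and <|
    ((tendsto_robustSolitonR_mul_log_div hδ₀ hc₀).eventually (eventually_le_nhds one_pos)).and <|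
    hRk.eventually (eventually_le_nhds (by positivity : (0 : ℝ) < 4 * exp (-4) / 3))
  refine ⟨max K 2, le_max_right _ _, fun k hk => ?_⟩
  obtain ⟨hk₃, hδR, hτ, hsmall⟩ := hK k (le_of_max_le_left hk)
  calc robustSolitonR c₀ δ k / (4 * k) = robustSolitonR c₀ δ k / k / 4 := by ring
    _ ≤ exp (-4) / 3 := by linarith
    _ ≤ _ := exp_neg_four_div_three_le_sum_robustSoliton hk₃ (hδ₀.trans_le hδR)
        (log_nonneg ((one_le_div hδ₀).2 hδR)) hτ
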